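/- Let n ≥ 1 and M be integers with M + 1 ≥ n, and let X, Y ∈ ℤ. Write v_k for the remainder of k upon division by n. Then the number of lattice points (i,j) with 0 ≤ i, 0 ≤ j, M - n < i + j ≤ M, i ≡ -X mod n, and j ≡ -Y mod n equals ⌊(M+1)/n⌋ + a, where a = -1 if v_{-X} ≥ v_{M+1} and v_{-X} - v_{M+1} + v_{-Y} ≥ n; a = 1 if v_{-X} < v_{M+1} and v_{-X} - v_{M+1} + v_{-Y} + n < n (i.e. v_{-X} + v_{-Y} < v_{M+1}); and a = 0 otherwise. -/
import Mathlib

private lemma ediv_eq_of_bounds (n x k : ℤ) (hn : 0 < n) (h1 : n * k ≤ x)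
    (h2 : x < n * (k + 1)) : x / n = k := by
  have h3 : k ≤ x / n := (Int.le_ediv_iff_mul_le hn).mpr (by linarith)
  have h4 : x / n < k + 1 := (Int.ediv_lt_iff_lt_mul hn).mpr (by linarith)
  omega

/-- counting lattice points of the trapezoid `E_M \ E_{M-n}` satisfying the
congruences `i ≡ -X`, `j ≡ -Y (mod n)`, for `M + 1 ≥ n`.  Here `v k = k % n`. -/
theorem stmt_3 (n M : ℤ) (hn : 1 ≤ n) (hM : n ≤ M + 1) (X Y : ℤ) :
    (((Finset.Icc (0 : ℤ) M ×ˢ Finset.Icc (0 : ℤ) M).filter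
        (fun p => M - n < p.1 + p.2 ∧ p.1 + p.2 ≤ M ∧
          p.1 % n = (-X) % n ∧ p.2 % n = (-Y) % n)).card : ℤ)
    = (M + 1) / n +
        (if (M + 1) % n ≤ (-X) % n ∧ n ≤ (-X) % n - (M + 1) % n + (-Y) % n then -1
         else if (-X) % n < (M + 1) % n ∧ (-X) % n + (-Y) % n < (M + 1) % n then 1
         else 0) := by
  have hn0 : 0 < n := by omega
  set a := (-X) % n with ha
  set b := (-Y) % n with hb
  have ha0 : 0 ≤ a := Int.emod_nonneg _ (by omega)
  have ha1 : a < n := Int.emod_lt_of_pos _ hn0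
  have hb0 : 0 ≤ b := Int.emod_nonneg _ (by omega)
  have hb1 : b < n := Int.emod_lt_of_pos _ hn0
  set u := (M - a - b) / n with hu
  have hw : M - a - b = n * u + (M - a - b) % n := (Int.mul_ediv_add_emod _ _).symm
  have hw0 : 0 ≤ (M - a - b) % n := Int.emod_nonneg _ (by omega)
  have hw1 : (M - a - b) % n < n := Int.emod_lt_of_pos _ hn0
  -- set equality
  have key : ((Finset.Icc (0 : ℤ) M ×ˢ Finset.Icc (0 : ℤ) M).filter
        (fun p => M - n < p.1 + p.2 ∧ p.1 + p.2 ≤ M ∧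
          p.1 % n = a ∧ p.2 % n = b))
      = (Finset.Icc (0 : ℤ) u).image (fun s => (a + n * s, b + n * (u - s))) := by
    ext ⟨i, j⟩
    simp only [Finset.mem_filter, Finset.mem_product, Finset.mem_Icc, Finset.mem_image]
    constructor
    · rintro ⟨⟨⟨hi0, hiM⟩, hj0, hjM⟩, h1, h2, h3, h4⟩
      have hi : i = n * (i / n) + a := by rw [← h3]; exact (Int.mul_ediv_add_emod _ _).symm
      have hj : j = n * (j / n) + b := by rw [← h4]; exact (Int.mul_ediv_add_emod _ _).symm
      set s := i / n with hs
      set t := j / n with ht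
      have hs0 : 0 ≤ s := Int.ediv_nonneg hi0 (by omega)
      have ht0 : 0 ≤ t := Int.ediv_nonneg hj0 (by omega)
      have hst : u = s + t := by
        rw [hu]
        apply ediv_eq_of_bounds _ _ _ hn0 <;> nlinarith
      refine ⟨s, ⟨hs0, by omega⟩, ?_⟩
      have : u - s = t := by omega
      rw [this]
      exact Prod.ext (by omega) (by omega)
    · rintro ⟨s, ⟨hs0, hsu⟩, heq⟩
      injection heq with hi' hj'
      have hi : i = a + n * s := hi'.symm
      have hj : j = b + n * (u - s) := hj'.symm
      have h1 : 0 ≤ n * s := mul_nonneg (by omega) hs0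
      have h2 : 0 ≤ n * (u - s) := mul_nonneg (by omega) (by omega)
      have hij : i + j = a + b + n * u := by rw [hi, hj]; ring
      have himod : i % n = a := by
        rw [hi, Int.add_mul_emod_self_left]
        exact Int.emod_eq_of_lt ha0 ha1
      have hjmod : j % n = b := by
        rw [hj, Int.add_mul_emod_self_left]
        exact Int.emod_eq_of_lt hb0 hb1
      refine ⟨⟨⟨by omega, by omega⟩, by omega, by omega⟩, by omega, by omega, himod, hjmod⟩
  rw [key]
  rw [Finset.card_image_of_injOn (fun x _ y _ hxy => by
    have := congrArg Prod.fst hxy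
    simp only at this
    have hne : n ≠ 0 := by omega
    nlinarith [this])]
  -- card of Icc
  rw [Int.card_Icc]
  -- now arithmetic
  set q := (M + 1) / n with hq
  set r := (M + 1) % n with hr
  have hqr : M + 1 = n * q + r := (Int.mul_ediv_add_emod _ _).symm
  have hr0 : 0 ≤ r := Int.emod_nonneg _ (by omega)
  have hr1 : r < n := Int.emod_lt_of_pos _ hn0
  have hq1 : 1 ≤ q := by
    rw [hq]
    exact (Int.le_ediv_iff_mul_le hn0).mpr (by omega)
  -- compute u relative to q by cases
  have hcase : (a + b < r ∧ u = q) ∨ (r ≤ a + b ∧ a + b < n + r ∧ u = q - 1)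
      ∨ (n + r ≤ a + b ∧ u = q - 2) := by
    rcases lt_or_ge (a + b) r with h | h
    · left; refine ⟨h, ?_⟩
      rw [hu]; apply ediv_eq_of_bounds _ _ _ hn0 <;> nlinarith
    · rcases lt_or_ge (a + b) (n + r) with h2 | h2
      · right; left; refine ⟨h, h2, ?_⟩
        rw [hu]; apply ediv_eq_of_bounds _ _ _ hn0 <;> nlinarith
      · right; right; refine ⟨h2, ?_⟩
        rw [hu]; apply ediv_eq_of_bounds _ _ _ hn0 <;> nlinarith
  have htn : ((u + 1 - 0).toNat : ℤ) = u + 1 := by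
    rcases hcase with ⟨_, h⟩ | ⟨_, _, h⟩ | ⟨_, h⟩ <;> omega
  rw [htn]
  split_ifs with h1 h2 <;> rcases hcase with ⟨hc, h⟩ | ⟨hc, hc2, h⟩ | ⟨hc, h⟩ <;> omega
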